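/- arXiv:2407.20269 — 8 statements merged into one kernel-verified Lean document; each statement's English description precedes it below -/
import Mathlib

section
/- Let p be an odd prime and write p - 1 = 2^n · z with z odd. If m ∈ (ZMod p)ˣ has multiplicative order (p-1)/2 and r ∈ (ZMod p)ˣ has multiplicative order 2^n, then m·r has multiplicative order p - 1. -/
theorem semi_primitive_mul_order_two_pow (p : ℕ) (hp : p.Prime) (hp2 : p ≠ 2)
    (n z : ℕ) (hz : Odd z) (hnz : p - 1 = 2 ^ n * z)
    (m r : (ZMod p)ˣ) (hm : orderOf m = (p - 1) / 2) (hr : orderOf r = 2 ^ n) :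
    orderOf (m * r) = p - 1 := by
  have hz0 : 0 < z := hz.pos
  have hp3 : 3 ≤ p := by
    have := hp.two_le
    omega
  have hpe : Even (p - 1) := Nat.Odd.sub_odd (hp.odd_of_ne_two hp2) odd_one
  have hn1 : 1 ≤ n := by
    by_contra h
    have hn0 : n = 0 := by omega
    rw [hn0] at hnz
    simp at hnz
    rw [hnz] at hpe
    exact (Nat.not_even_iff_odd.mpr hz) hpe
  have hpow : (2:ℕ) ^ n = 2 ^ (n - 1) * 2 := by
    rw [← pow_succ]
    congr 1
    omega
  have hhalf : (p - 1) / 2 = 2 ^ (n - 1) * z := by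
    have : p - 1 = 2 * (2 ^ (n - 1) * z) := by
      rw [hnz, hpow]; ring
    omega
  have hpos : 0 < p - 1 := by omega
  apply orderOf_eq_of_pow_and_pow_div_prime hpos
  · rw [mul_pow]
    have h1 : m ^ (p - 1) = 1 := by
      rw [← orderOf_dvd_iff_pow_eq_one, hm]
      exact Nat.div_dvd_of_dvd hpe.two_dvd
    have h2 : r ^ (p - 1) = 1 := by
      rw [← orderOf_dvd_iff_pow_eq_one, hr, hnz]
      exact Dvd.intro z rfl
    rw [h1, h2, one_mul]
  · intro q hq hqd
    rcases eq_or_ne q 2 with rfl | hq2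
    · have h1 : m ^ ((p - 1) / 2) = 1 := by
        rw [← orderOf_dvd_iff_pow_eq_one, hm]
      rw [mul_pow, h1, one_mul]
      intro h2
      rw [← orderOf_dvd_iff_pow_eq_one, hr, hhalf] at h2
      rw [hpow] at h2
      have h3 : (2:ℕ) ∣ z := (mul_dvd_mul_iff_left (by positivity : (2:ℕ)^(n-1) ≠ 0)).mp h2
      exact (Nat.not_even_iff_odd.mpr hz) (even_iff_two_dvd.mpr h3)
    · -- q odd prime dividing p - 1 = 2^n * z, so q ∣ z
      have hqz : q ∣ z := by
        have : q ∣ 2 ^ n * z := hnz ▸ hqd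
        rcases (Nat.Prime.dvd_mul hq).mp this with h | h
        · exact absurd (hq.dvd_of_dvd_pow h) (by
            intro hd
            exact hq2 ((Nat.prime_dvd_prime_iff_eq hq Nat.prime_two).mp hd))
        · exact h
      have hdiv : (p - 1) / q = 2 ^ n * (z / q) := by
        rw [hnz, Nat.mul_div_assoc _ hqz]
      have h2 : r ^ ((p - 1) / q) = 1 := by
        rw [← orderOf_dvd_iff_pow_eq_one, hr, hdiv]
        exact Dvd.intro _ rfl
      rw [mul_pow, h2, mul_one]
      intro h1
      rw [← orderOf_dvd_iff_pow_eq_one, hm, hhalf, hdiv] at h1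
      -- 2^(n-1) * z ∣ 2^n * (z/q) → z ∣ 2 * (z/q) → z ∣ z/q, contradiction
      have hrw : 2 ^ n * (z / q) = 2 ^ (n - 1) * (2 * (z / q)) := by
        rw [hpow]; ring
      rw [hrw] at h1
      have h3 : z ∣ 2 * (z / q) :=
        (mul_dvd_mul_iff_left (by positivity : (2:ℕ)^(n-1) ≠ 0)).mp h1
      have h4 : z ∣ z / q := Nat.Coprime.dvd_of_dvd_mul_left hz.coprime_two_right h3
      have hq2' : 2 ≤ q := hq.two_le
      have hzq : z / q < z := Nat.div_lt_self hz0 (by omega)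
      have hzq0 : 0 < z / q := Nat.div_pos (Nat.le_of_dvd hz0 hqz) (by omega)
      have := Nat.le_of_dvd hzq0 h4
      omega
end

section
/- Let p be a prime with p ≡ 1 (mod 4) and write p - 1 = 2^n · z with z odd. If m ∈ (ZMod p)ˣ has multiplicative order (p-1)/2 and r ∈ (ZMod p)ˣ has multiplicative order 2^n, then -m·r has multiplicative order p - 1. Moreover, -m has multiplicative order (p-1)/2 if and only if p ≡ 1 (mod 8). -/
lemma aux_order_two_pow {G : Type*} [Group G] (x : G) (n : ℕ) (hn : 1 ≤ n)
    (h1 : x ^ 2 ^ n = 1) (h2 : x ^ 2 ^ (n - 1) ≠ 1) : orderOf x = 2 ^ n := by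
  have hd : orderOf x ∣ 2 ^ n := orderOf_dvd_of_pow_eq_one h1
  obtain ⟨k, hk, he⟩ := (Nat.dvd_prime_pow Nat.prime_two).mp hd
  rcases Nat.lt_or_ge k n with h | h
  · exact absurd (orderOf_dvd_iff_pow_eq_one.mp (he ▸ pow_dvd_pow 2 (by omega))) h2
  · rw [he, Nat.le_antisymm hk h]

lemma aux_eq_neg_one {p : ℕ} [Fact p.Prime] (x : (ZMod p)ˣ) (hx : orderOf x = 2) :
    x = -1 := by
  have h1 : x ^ 2 = 1 := by rw [← hx, pow_orderOf_eq_one]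
  have h2 : (x : ZMod p) * (x : ZMod p) = 1 := by
    have := congrArg (Units.val) h1
    simpa [pow_two] using this
  rcases mul_self_eq_one_iff.mp h2 with h | h
  · exfalso
    have : x = 1 := Units.ext (by simpa using h)
    rw [this, orderOf_one] at hx; omega
  · exact Units.ext (by simpa using h)

theorem neg_semi_primitive_mul (p : ℕ) (hp : p.Prime) (hp4 : p % 4 = 1)
    (n z : ℕ) (hz : Odd z) (hnz : p - 1 = 2 ^ n * z)
    (m r : (ZMod p)ˣ) (hm : orderOf m = (p - 1) / 2) (hr : orderOf r = 2 ^ n) :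
    orderOf (-(m * r)) = p - 1 ∧
      (orderOf (-m) = (p - 1) / 2 ↔ p % 8 = 1) := by
  haveI := Fact.mk hp
  have hp5 : 5 ≤ p := by have := hp.two_le; omega
  have hz1 : 1 ≤ z := hz.pos
  have hzc : Nat.Coprime 2 z := Nat.coprime_two_left.mpr hz
  have h4 : 4 ∣ p - 1 := by omega
  have hn2 : 2 ≤ n := by
    have h4' : 2 ^ 2 ∣ 2 ^ n * z := by rw [← hnz]; simpa using h4
    have h4'' : (2 : ℕ) ^ 2 ∣ 2 ^ n := (Nat.Coprime.pow_left 2 hzc).dvd_of_dvd_mul_right h4'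
    exact (Nat.pow_dvd_pow_iff_le_right (by norm_num)).mp h4''
  have h2n : (2 : ℕ) ^ n = 2 ^ (n - 1) * 2 := by
    rw [← pow_succ]; congr 1; omega
  have hhalf : (p - 1) / 2 = 2 ^ (n - 1) * z := by
    rw [hnz, h2n]
    rw [mul_right_comm, Nat.mul_div_cancel _ (by norm_num)]
  have hm' : orderOf m = 2 ^ (n - 1) * z := by rw [hm, hhalf]
  have hne : Even (2 ^ (n - 1)) := (Nat.even_pow' (by omega)).mpr even_two
  have hnn : Even (2 ^ n) := (Nat.even_pow' (by omega)).mpr even_two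
  -- generic gcd fact: gcd (2^(n-1) * z) (2^(n-1) * 2) part
  have hgcd1 : Nat.gcd (2 ^ (n - 1) * z) (2 ^ n) = 2 ^ (n - 1) := by
    rw [h2n, Nat.gcd_mul_left, Nat.Coprime.gcd_eq_one (Nat.coprime_comm.mp hzc), mul_one]
  constructor
  · -- first part
    set s : (ZMod p)ˣ := -(m * r) with hs
    -- z ∣ orderOf s
    have e1 : s ^ 2 ^ n = m ^ 2 ^ n := by
      rw [hs, hnn.neg_pow, mul_pow, ← hr, pow_orderOf_eq_one, mul_one]
    have e2 : orderOf (s ^ 2 ^ n) = z := by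
      rw [e1, orderOf_pow, hm', hgcd1, Nat.mul_div_cancel_left _ (by positivity)]
    have hzd : z ∣ orderOf s := by
      rw [orderOf_pow] at e2
      refine ⟨Nat.gcd (orderOf s) (2 ^ n), ?_⟩
      rw [← e2, Nat.div_mul_cancel (Nat.gcd_dvd_left _ _)]
    -- 2^n ∣ orderOf s
    have e3 : orderOf (s ^ z) = 2 ^ n := by
      apply aux_order_two_pow _ n (by omega)
      · rw [hs, hz.neg_pow, hnn.neg_pow, ← pow_mul, mul_pow]
        have hm1 : m ^ (z * 2 ^ n) = 1 := by
          apply orderOf_dvd_iff_pow_eq_one.mp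
          rw [hm', h2n]
          exact ⟨2, by ring⟩
        have hr1 : r ^ (z * 2 ^ n) = 1 := by
          apply orderOf_dvd_iff_pow_eq_one.mp
          rw [hr]; exact ⟨z, by ring⟩
        rw [hm1, hr1, mul_one]
      · rw [hs, hz.neg_pow, hne.neg_pow, ← pow_mul, mul_pow]
        have hm1 : m ^ (z * 2 ^ (n - 1)) = 1 := by
          apply orderOf_dvd_iff_pow_eq_one.mp
          rw [hm']; exact ⟨1, by ring⟩
        rw [hm1, one_mul]
        intro hcon
        have hdv : 2 ^ n ∣ z * 2 ^ (n - 1) := hr ▸ orderOf_dvd_of_pow_eq_one hcon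
        rw [h2n, mul_comm z] at hdv
        have h2z : 2 ∣ z := (mul_dvd_mul_iff_left (a := 2 ^ (n - 1)) (by positivity)).mp hdv
        rcases hz with ⟨w, hw⟩; omega
    have h2d : 2 ^ n ∣ orderOf s := by
      rw [orderOf_pow] at e3
      refine ⟨Nat.gcd (orderOf s) z, ?_⟩
      rw [← e3, Nat.div_mul_cancel (Nat.gcd_dvd_left _ _)]
    have hdvd : 2 ^ n * z ∣ orderOf s :=
      (Nat.Coprime.pow_left n hzc).mul_dvd_of_dvd_of_dvd h2d hzd
    have hcard : orderOf s ∣ p - 1 := by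
      rw [← ZMod.card_units p]; exact orderOf_dvd_card
    exact Nat.dvd_antisymm hcard (hnz ▸ hdvd)
  · constructor
    · -- forward: contrapositive via n = 2 when p % 8 ≠ 1
      intro he
      by_contra h8
      have hn3 : n < 3 := by
        by_contra hge
        have : (8 : ℕ) ∣ p - 1 := by
          rw [hnz]; exact Dvd.dvd.mul_right (by exact pow_dvd_pow 2 (by omega) : (2:ℕ)^3 ∣ 2^n) z
        omega
      have hn : n = 2 := by omega
      -- m^z has order 2, hence equals -1
      have homz : orderOf (m ^ z) = 2 := by
        rw [orderOf_pow, hm', Nat.gcd_eq_right (dvd_mul_left z _),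
          Nat.mul_div_cancel _ hz1]
        subst hn; norm_num
      have hmz : m ^ z = -1 := aux_eq_neg_one _ homz
      have hone : (-m) ^ z = 1 := by
        rw [hz.neg_pow, hmz, neg_neg]
      have : orderOf (-m) ∣ z := orderOf_dvd_of_pow_eq_one hone
      have hle : orderOf (-m) ≤ z := Nat.le_of_dvd (by omega) this
      rw [he, hhalf, hn] at hle
      norm_num at hle
      omega
    · -- backward: p % 8 = 1 gives n ≥ 3
      intro h8
      have h8' : 8 ∣ p - 1 := by omega
      have hn3 : 3 ≤ n := by
        have h8'' : 2 ^ 3 ∣ 2 ^ n * z := by rw [← hnz]; simpa using h8'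
        have : (2 : ℕ) ^ 3 ∣ 2 ^ n := (Nat.Coprime.pow_left 3 hzc).dvd_of_dvd_mul_right h8''
        exact (Nat.pow_dvd_pow_iff_le_right (by norm_num)).mp this
      set e := orderOf (-m) with hev
      have hedvd : e ∣ 2 ^ (n - 1) * z := by
        apply orderOf_dvd_of_pow_eq_one
        rw [(hne.mul_right z).neg_pow, ← hm', pow_orderOf_eq_one]
      have hze : z ∣ e := by
        have e1 : (-m) ^ 2 ^ (n - 1) = m ^ 2 ^ (n - 1) := hne.neg_pow m
        have e2 : orderOf ((-m) ^ 2 ^ (n - 1)) = z := by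
          rw [e1, orderOf_pow, hm',
            Nat.gcd_eq_right (dvd_mul_right _ _),
            Nat.mul_div_cancel_left _ (by positivity)]
        rw [orderOf_pow] at e2
        refine ⟨Nat.gcd e (2 ^ (n - 1)), ?_⟩
        rw [← e2, Nat.div_mul_cancel (Nat.gcd_dvd_left _ _)]
      have h2e : 2 ^ (n - 1) ∣ e := by
        have e3 : orderOf ((-m) ^ z) = 2 ^ (n - 1) := by
          rw [hz.neg_pow]
          apply aux_order_two_pow _ (n - 1) (by omega)
          · rw [hne.neg_pow, ← pow_mul]
            apply orderOf_dvd_iff_pow_eq_one.mp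
            rw [hm']; exact ⟨1, by ring⟩
          · have hne2 : Even ((2:ℕ) ^ (n - 1 - 1)) := (Nat.even_pow' (by omega)).mpr even_two
            rw [hne2.neg_pow, ← pow_mul]
            intro hcon
            have hdv : 2 ^ (n - 1) * z ∣ z * 2 ^ (n - 1 - 1) :=
              hm' ▸ orderOf_dvd_of_pow_eq_one hcon
            have hle := Nat.le_of_dvd (by positivity) hdv
            have hlt : 2 ^ (n - 1 - 1) * 2 = 2 ^ (n - 1) := by
              rw [← pow_succ]; congr 1; omega
            nlinarith [pow_pos (show 0 < 2 by norm_num) (n - 1 - 1), hz1]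
        rw [orderOf_pow] at e3
        refine ⟨Nat.gcd e z, ?_⟩
        rw [← e3, Nat.div_mul_cancel (Nat.gcd_dvd_left _ _)]
      have hdvd : 2 ^ (n - 1) * z ∣ e :=
        (Nat.Coprime.pow_left (n - 1) hzc).mul_dvd_of_dvd_of_dvd h2e hze
      rw [hhalf]
      exact Nat.dvd_antisymm hedvd hdvd
end

section
/- Let p be a prime with p ≡ 1 (mod 4) and write p - 1 = 2^n · z with z odd. Let m ∈ (ZMod p)ˣ have multiplicative order (p-1)/2 and r ∈ (ZMod p)ˣ have multiplicative order 2^n. Then both m²·r and -m²·r have multiplicative order p - 1. Moreover: if p ≡ 1 (mod 8) then neither m² nor -m² has multiplicative order (p-1)/2, while if p ≡ 5 (mod 8) then -m² has multiplicative order (p-1)/2 and m² does not. -/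
/-- order of a power when the order factors. -/
lemma aux_ord_pow {G : Type*} [Group G] [Finite G] (x : G) {k d : ℕ} (hk : 0 < k)
    (h : orderOf x = k * d) : orderOf (x ^ k) = d := by
  rw [orderOf_pow, h]
  have hg : Nat.gcd (k * d) k = k := Nat.gcd_eq_right ⟨d, rfl⟩
  rw [hg, Nat.mul_div_cancel_left _ hk]

/-- order of a product: small 2-power times full 2-power. -/
lemma aux_two_pow {G : Type*} [CommGroup G] {a b : G} {n : ℕ}
    (ha : orderOf a ∣ 2 ^ (n - 1)) (hb : orderOf b = 2 ^ n) :
    orderOf (a * b) = 2 ^ n := by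
  have h1 : orderOf (a * b) ∣ 2 ^ n := by
    refine (Commute.all a b).orderOf_mul_dvd_lcm.trans (Nat.lcm_dvd ?_ hb.dvd)
    exact ha.trans (pow_dvd_pow 2 (Nat.sub_le n 1))
  obtain ⟨k, hk, hab⟩ := (Nat.dvd_prime_pow Nat.prime_two).mp h1
  have h2 : orderOf b ∣ 2 ^ max (n - 1) k := by
    have hb' : b = a⁻¹ * (a * b) := by group
    rw [hb']
    refine (Commute.all _ _).orderOf_mul_dvd_lcm.trans (Nat.lcm_dvd ?_ ?_)
    · rw [orderOf_inv]
      exact ha.trans (pow_dvd_pow 2 (le_max_left _ _))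
    · exact hab ▸ pow_dvd_pow 2 (le_max_right _ _)
  rw [hb] at h2
  have hle : n ≤ max (n - 1) k := (Nat.pow_dvd_pow_iff_le_right one_lt_two).mp h2
  have hkn : k = n := by omega
  rw [hab, hkn]

theorem sq_semi_primitive_one_mod_four (p : ℕ) (hp : p.Prime) (hp4 : p % 4 = 1)
    (n z : ℕ) (hz : Odd z) (hnz : p - 1 = 2 ^ n * z)
    (m r : (ZMod p)ˣ) (hm : orderOf m = (p - 1) / 2) (hr : orderOf r = 2 ^ n) :
    orderOf (m ^ 2 * r) = p - 1 ∧
    orderOf (-(m ^ 2 * r)) = p - 1 ∧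
    (p % 8 = 1 →
      orderOf (m ^ 2) ≠ (p - 1) / 2 ∧ orderOf (-(m ^ 2)) ≠ (p - 1) / 2) ∧
    (p % 8 = 5 →
      orderOf (-(m ^ 2)) = (p - 1) / 2 ∧ orderOf (m ^ 2) ≠ (p - 1) / 2) := by
  haveI : Fact p.Prime := ⟨hp⟩
  have hp2 : 2 ≤ p := hp.two_le
  have hp5 : 5 ≤ p := by omega
  haveI : Fact (2 < p) := ⟨by omega⟩
  have hzpos : 0 < z := hz.pos
  have hcoz : Nat.Coprime 2 z := by
    have : ¬ 2 ∣ z := by rw [Nat.two_dvd_ne_zero]; exact Nat.odd_iff.mp hz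
    exact Nat.prime_two.coprime_iff_not_dvd.mpr this
  -- n ≥ 2
  have hn2 : 2 ≤ n := by
    by_contra hlt
    obtain ⟨c, hc⟩ := hz
    interval_cases n <;> omega
  -- (p-1)/2
  have hsplit : p - 1 = 2 * (2 ^ (n - 1) * z) := by
    rw [hnz, ← mul_assoc, ← pow_succ']
    congr 2
    omega
  have hhalf : (p - 1) / 2 = 2 ^ (n - 1) * z := by omega
  have hm' : orderOf m = 2 ^ (n - 1) * z := hm.trans hhalf
  -- order of -1
  have hneg1 : orderOf (-1 : (ZMod p)ˣ) = 2 := by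
    refine orderOf_eq_prime (by simp) ?_
    intro h
    apply ZMod.neg_one_ne_one (n := p)
    have := congrArg Units.val h
    simpa using this
  -- order of m^(2z) is 2^(n-2)
  have hm2z : orderOf (m ^ (2 * z)) = 2 ^ (n - 2) := by
    refine aux_ord_pow m (by positivity) ?_
    rw [hm']
    rw [show (2 : ℕ) ^ (n - 1) = 2 ^ (n - 2) * 2 by rw [← pow_succ]; congr 1; omega]
    ring
  -- order of r^z is 2^n
  have hrz : orderOf (r ^ z) = 2 ^ n := by
    rw [orderOf_pow, hr, Nat.Coprime.gcd_eq_one (Nat.Coprime.pow_left n hcoz), Nat.div_one]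
  -- order of m^(2^(n-1)) is z
  have hmz : orderOf (m ^ (2 ^ (n - 1))) = z := aux_ord_pow m (by positivity) hm'
  -- order of (m^(2^(n-1)))^4 is z
  have hmz4 : orderOf ((m ^ (2 ^ (n - 1))) ^ 4) = z := by
    rw [orderOf_pow, hmz]
    rw [Nat.Coprime.gcd_eq_one, Nat.div_one]
    exact Nat.Coprime.pow_right 2 (Nat.coprime_comm.mp hcoz)
  have hcop : Nat.Coprime (2 ^ n) z := Nat.Coprime.pow_left n hcoz
  -- key: order from z-power and 2^n-power
  have key : ∀ x : (ZMod p)ˣ, orderOf (x ^ z) = 2 ^ n → orderOf (x ^ (2 ^ n)) = z →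
      orderOf x = p - 1 := by
    intro x h1 h2
    have d1 : 2 ^ n ∣ orderOf x := h1 ▸ orderOf_pow_dvd z
    have d2 : z ∣ orderOf x := h2 ▸ orderOf_pow_dvd (2 ^ n)
    have d3 : 2 ^ n * z ∣ orderOf x := hcop.mul_dvd_of_dvd_of_dvd d1 d2
    have d4 : orderOf x ∣ p - 1 := (ZMod.card_units p) ▸ orderOf_dvd_card
    exact Nat.dvd_antisymm d4 (hnz ▸ d3)
  -- main: for s = ±1, orderOf (s * (m^2*r)) = p - 1
  have main : ∀ s : (ZMod p)ˣ, s = 1 ∨ s = -1 → orderOf (s * (m ^ 2 * r)) = p - 1 := by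
    intro s hs
    have hs2 : s ^ 2 = 1 := by rcases hs with h | h <;> simp [h]
    have hsz : s ^ z = s := by
      rcases hs with h | h
      · simp [h]
      · rw [h, hz.neg_pow, one_pow]
    apply key
    · have e1 : (s * (m ^ 2 * r)) ^ z = (s * m ^ (2 * z)) * r ^ z := by
        rw [mul_pow, mul_pow, hsz, ← pow_mul, mul_assoc]
      rw [e1]
      refine aux_two_pow ?_ hrz
      have hds : orderOf s ∣ 2 := orderOf_dvd_of_pow_eq_one hs2
      refine ((Commute.all s _).orderOf_mul_dvd_lcm).trans (Nat.lcm_dvd ?_ ?_)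
      · exact hds.trans (dvd_pow_self 2 (by omega : n - 1 ≠ 0))
      · exact hm2z ▸ pow_dvd_pow 2 (by omega)
    · have e2 : (s * (m ^ 2 * r)) ^ (2 ^ n) = (m ^ (2 ^ (n - 1))) ^ 4 := by
        rw [mul_pow, mul_pow]
        have : s ^ 2 ^ n = 1 := by
          rw [show (2:ℕ) ^ n = 2 * 2 ^ (n-1) by rw [← pow_succ']; congr 1; omega,
            pow_mul, hs2, one_pow]
        rw [this, one_mul, ← pow_mul, ← pow_mul]
        rw [show 2 * 2 ^ n = 2 ^ (n-1) * 4 by rw [show (4:ℕ) = 2^2 by norm_num, ← pow_add, ← pow_succ']; congr 1; omega]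
        have hr1 : r ^ 2 ^ n = 1 := hr ▸ pow_orderOf_eq_one r
        rw [hr1, mul_one]
      rw [e2, hmz4]
  refine ⟨?_, ?_, ?_, ?_⟩
  · have := main 1 (Or.inl rfl); rwa [one_mul] at this
  · have := main (-1) (Or.inr rfl); rwa [neg_one_mul] at this
  · intro h8
    have hn3 : 3 ≤ n := by
      by_contra hlt
      obtain ⟨c, hc⟩ := hz
      interval_cases n <;> omega
    have hordm2 : orderOf (m ^ 2) = 2 ^ (n - 2) * z := by
      refine aux_ord_pow m two_pos ?_
      rw [hm', ← mul_assoc, ← pow_succ']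
      congr 2
      omega
    constructor
    · rw [hordm2, hhalf]
      intro h
      have := Nat.eq_of_mul_eq_mul_right hzpos h
      have := Nat.pow_right_injective (le_refl 2) this
      omega
    · intro h
      have hpowz : orderOf ((-(m ^ 2)) ^ z) = 2 ^ (n - 1) := by
        refine aux_ord_pow _ hzpos ?_
        rw [h, hhalf]; ring
      have e3 : (-(m ^ 2)) ^ z = (-1) * m ^ (2 * z) := by
        rw [hz.neg_pow, ← pow_mul, neg_one_mul]
      have hdvd : orderOf ((-(m ^ 2)) ^ z) ∣ 2 ^ (n - 2) := by
        rw [e3]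
        refine ((Commute.all _ _).orderOf_mul_dvd_lcm).trans (Nat.lcm_dvd ?_ ?_)
        · rw [hneg1]
          exact dvd_pow_self 2 (by omega : n - 2 ≠ 0)
        · exact hm2z.dvd
      rw [hpowz] at hdvd
      have := (Nat.pow_dvd_pow_iff_le_right one_lt_two).mp hdvd
      omega
  · intro h8
    have hn_eq : n = 2 := by
      by_contra hne
      obtain ⟨c, hc⟩ := hz
      rcases Nat.lt_or_ge n 3 with hlt | hge
      · interval_cases n <;> omega
      · have : (2:ℕ) ^ 3 ∣ 2 ^ n := pow_dvd_pow 2 hge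
        obtain ⟨t, ht⟩ := this
        have : p - 1 = 8 * (t * z) := by rw [hnz, ht]; ring
        omega
    subst hn_eq
    have hordm2 : orderOf (m ^ 2) = z := by
      refine aux_ord_pow m two_pos ?_
      rw [hm']; norm_num
    constructor
    · have e4 : -(m ^ 2) = (-1) * m ^ 2 := by rw [neg_one_mul]
      rw [e4]
      rw [(Commute.all _ _).orderOf_mul_eq_mul_orderOf_of_coprime
        (by rw [hneg1, hordm2]; exact hcoz)]
      rw [hneg1, hordm2, hhalf]
      norm_num
    · rw [hordm2, hhalf]
      norm_num
      omega
end

section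
/- Let p be an odd prime and write p - 1 = 2^n · z with z odd. Let r ∈ (ZMod p)ˣ have multiplicative order 2^n, and let g ∈ (ZMod p)ˣ. Then r·g has multiplicative order p - 1 if and only if g is a square in (ZMod p)ˣ and for every odd prime q dividing p - 1 one has g^((p-1)/(2q)) ≠ 1. In particular, the set { r·h : h of order p - 1 } does not depend on the choice of r of order 2^n. -/
/-!
Write `N = p - 1`. The element `r * g` is primitive iff `(r * g) ^ (N / q) ≠ 1` for every prime
`q ∣ N`. Since `r` has order exactly `2 ^ n`, `r ^ (N / 2) = -1`, so the condition at `q = 2` reads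
`g ^ (N / 2) ≠ -1`, i.e. `g` is a square by Euler's criterion. For odd `q`, `2 ^ n ∣ N / q`, so `r`
drops out; and for a square `g` we have `g ^ (q * (N / (2q))) = 1`, so coprimality of `2` and `q`
gives `g ^ (N / q) = 1 ↔ g ^ (N / (2q)) = 1`. For the second claim, `x = r * h` with `h` primitive
iff `r⁻¹ * x` is primitive, and `r⁻¹` again has order `2 ^ n`, so membership is a condition on
`x` alone.
-/

theorem orderOf_eq_iff_forall_prime_pow_div_ne_one {G : Type*} [Monoid G] {x : G} {N : ℕ}
    (hN : 0 < N) (hx : x ^ N = 1) :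
    orderOf x = N ↔ ∀ q : ℕ, q.Prime → q ∣ N → x ^ (N / q) ≠ 1 := by
  refine ⟨?_, orderOf_eq_of_pow_and_pow_div_prime hN hx⟩
  rintro rfl q hq hqN
  exact pow_ne_one_of_lt_orderOf (Nat.div_pos (Nat.le_of_dvd hN hqN) hq.pos).ne'
    (Nat.div_lt_self hN hq.one_lt)

theorem pow_two_mul_eq_one_iff_of_pow_odd_mul_eq_one {M : Type*} [Monoid M] {g : M} {q e : ℕ}
    (hq : Odd q) (hg : g ^ (q * e) = 1) : g ^ (2 * e) = 1 ↔ g ^ e = 1 := by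
  refine ⟨fun h => (pow_eq_one_iff_of_coprime hq.coprime_two_right).mp ?_, fun h => ?_⟩
  · rw [← pow_mul, ← pow_mul, mul_comm e, mul_comm e]
    exact ⟨hg, h⟩
  · rw [mul_comm, pow_mul, h, one_pow]

namespace Units

variable {R : Type*} [CommRing R] [NoZeroDivisors R]

theorem sq_eq_one_iff {u : Rˣ} : u ^ 2 = 1 ↔ u = 1 ∨ u = -1 := by
  simp only [Units.ext_iff, Units.val_pow_eq_pow_val, Units.val_one, Units.val_neg,
    _root_.sq_eq_one_iff]

theorem pow_two_pow_mul_eq_neg_one_of_orderOf_eq {r : Rˣ} {k z : ℕ}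
    (hr : orderOf r = 2 ^ (k + 1)) (hz : Odd z) : r ^ (2 ^ k * z) = -1 := by
  have hsq : (r ^ 2 ^ k) ^ 2 = 1 := by rw [← pow_mul, ← pow_succ, ← hr, pow_orderOf_eq_one]
  have hne : r ^ 2 ^ k ≠ 1 :=
    pow_ne_one_of_lt_orderOf (by positivity) (hr ▸ Nat.pow_lt_pow_succ one_lt_two)
  rw [pow_mul, (sq_eq_one_iff.mp hsq).resolve_left hne, hz.neg_one_pow]

end Units

namespace FiniteField

variable {F : Type*} [Field F] [Fintype F] {n z : ℕ}

theorem unit_isSquare_iff_pow_card_sub_one_div_two (hF : ringChar F ≠ 2) (g : Fˣ) :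
    IsSquare g ↔ g ^ ((Fintype.card F - 1) / 2) = 1 := by
  have := odd_card_of_char_ne_two hF
  rw [unit_isSquare_iff hF, show Fintype.card F / 2 = (Fintype.card F - 1) / 2 by omega]

theorem exists_eq_succ_of_card_sub_one_eq_two_pow_mul_odd (hF : ringChar F ≠ 2) (hz : Odd z)
    (hcard : Fintype.card F - 1 = 2 ^ n * z) : ∃ k, n = k + 1 := by
  refine Nat.exists_eq_succ_of_ne_zero ?_
  rintro rfl
  have := odd_card_of_char_ne_two hF
  rw [pow_zero, one_mul] at hcard
  rw [Nat.odd_iff] at hz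
  omega

theorem unit_pow_card_sub_one_eq_one (g : Fˣ) : g ^ (Fintype.card F - 1) = 1 := by
  classical
  rw [← Fintype.card_units, pow_card_eq_one]

theorem mul_pow_card_sub_one_div_two_ne_one_iff (hF : ringChar F ≠ 2) (hz : Odd z)
    (hcard : Fintype.card F - 1 = 2 ^ n * z) {r : Fˣ} (hr : orderOf r = 2 ^ n) (g : Fˣ) :
    (r * g) ^ ((Fintype.card F - 1) / 2) ≠ 1 ↔ IsSquare g := by
  obtain ⟨k, rfl⟩ := exists_eq_succ_of_card_sub_one_eq_two_pow_mul_odd hF hz hcard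
  have hhalf : (Fintype.card F - 1) / 2 = 2 ^ k * z := by
    rw [hcard, pow_succ, mul_right_comm]; omega
  have hsq : (g ^ (2 ^ k * z)) ^ 2 = 1 := by
    rw [← pow_mul, mul_right_comm, ← pow_succ, ← hcard, unit_pow_card_sub_one_eq_one]
  have hneg : (-1 : Fˣ) ≠ 1 := fun h =>
    Ring.neg_one_ne_one_of_char_ne_two hF (by simpa using congrArg Units.val h)
  rw [unit_isSquare_iff_pow_card_sub_one_div_two hF, hhalf, mul_pow,
    Units.pow_two_pow_mul_eq_neg_one_of_orderOf_eq hr hz]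
  rcases Units.sq_eq_one_iff.mp hsq with h | h <;> simp [h, hneg]

theorem mul_pow_card_sub_one_div_ne_one_iff (hF : ringChar F ≠ 2) (hz : Odd z)
    (hcard : Fintype.card F - 1 = 2 ^ n * z) {r : Fˣ} (hr : orderOf r = 2 ^ n)
    {g : Fˣ} (hg : IsSquare g) {q : ℕ} (hq : Odd q) (hqN : q ∣ Fintype.card F - 1) :
    (r * g) ^ ((Fintype.card F - 1) / q) ≠ 1 ↔ g ^ ((Fintype.card F - 1) / (2 * q)) ≠ 1 := by
  obtain ⟨k, rfl⟩ := exists_eq_succ_of_card_sub_one_eq_two_pow_mul_odd hF hz hcard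
  obtain ⟨c, rfl⟩ : q ∣ z :=
    ((Nat.Coprime.pow_right _ hq.coprime_two_right).dvd_of_dvd_mul_left (hcard ▸ hqN))
  have hN : Fintype.card F - 1 = q * 2 * (2 ^ k * c) := by rw [hcard]; ring
  have hdiv_q : (Fintype.card F - 1) / q = 2 * (2 ^ k * c) := by
    rw [hN, mul_assoc, Nat.mul_div_cancel_left _ hq.pos]
  have hdiv_two_q : (Fintype.card F - 1) / (2 * q) = 2 ^ k * c := by
    rw [hN, mul_comm q, Nat.mul_div_cancel_left _ (Nat.mul_pos two_pos hq.pos)]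
  have hdiv_two : (Fintype.card F - 1) / 2 = q * (2 ^ k * c) := by
    rw [hN, mul_comm q, mul_assoc, Nat.mul_div_cancel_left _ two_pos]
  have hr1 : r ^ (2 * (2 ^ k * c)) = 1 := by
    rw [← mul_assoc, ← pow_succ', pow_mul, ← hr, pow_orderOf_eq_one, one_pow]
  rw [unit_isSquare_iff_pow_card_sub_one_div_two hF g, hdiv_two] at hg
  rw [hdiv_q, hdiv_two_q, mul_pow, hr1, one_mul]
  exact not_congr (pow_two_mul_eq_one_iff_of_pow_odd_mul_eq_one hq hg)

theorem orderOf_mul_eq_card_sub_one_iff (hF : ringChar F ≠ 2) (hz : Odd z)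
    (hcard : Fintype.card F - 1 = 2 ^ n * z) {r : Fˣ} (hr : orderOf r = 2 ^ n) (g : Fˣ) :
    orderOf (r * g) = Fintype.card F - 1 ↔ IsSquare g ∧
      ∀ q : ℕ, q.Prime → Odd q → q ∣ Fintype.card F - 1 →
        g ^ ((Fintype.card F - 1) / (2 * q)) ≠ 1 := by
  have hN : 0 < Fintype.card F - 1 := hcard ▸ Nat.mul_pos (by positivity) hz.pos
  have h2N : 2 ∣ Fintype.card F - 1 := by have := odd_card_of_char_ne_two hF; omega
  rw [orderOf_eq_iff_forall_prime_pow_div_ne_one hN (unit_pow_card_sub_one_eq_one _)]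
  constructor
  · intro h
    have hg : IsSquare g :=
      (mul_pow_card_sub_one_div_two_ne_one_iff hF hz hcard hr g).mp (h 2 Nat.prime_two h2N)
    exact ⟨hg, fun q hq hqo hqN =>
      (mul_pow_card_sub_one_div_ne_one_iff hF hz hcard hr hg hqo hqN).mp (h q hq hqN)⟩
  · rintro ⟨hg, hodd⟩ q hq hqN
    rcases hq.eq_two_or_odd' with rfl | hqo
    · exact (mul_pow_card_sub_one_div_two_ne_one_iff hF hz hcard hr g).mpr hg
    · exact (mul_pow_card_sub_one_div_ne_one_iff hF hz hcard hr hg hqo hqN).mpr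
        (hodd q hq hqo hqN)

end FiniteField

theorem mul_by_order_two_pow_primitive_iff (p : ℕ) (hp : p.Prime) (hp2 : p ≠ 2)
    (n z : ℕ) (hz : Odd z) (hnz : p - 1 = 2 ^ n * z) :
    (∀ r g : (ZMod p)ˣ, orderOf r = 2 ^ n →
      (orderOf (r * g) = p - 1 ↔
        IsSquare g ∧
          ∀ q : ℕ, q.Prime → Odd q → q ∣ p - 1 → g ^ ((p - 1) / (2 * q)) ≠ 1)) ∧
    (∀ r r' : (ZMod p)ˣ, orderOf r = 2 ^ n → orderOf r' = 2 ^ n →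
      {x : (ZMod p)ˣ | ∃ h : (ZMod p)ˣ, orderOf h = p - 1 ∧ x = r * h} =
        {x : (ZMod p)ˣ | ∃ h : (ZMod p)ˣ, orderOf h = p - 1 ∧ x = r' * h}) := by
  have := Fact.mk hp
  have hF : ringChar (ZMod p) ≠ 2 := by rwa [ZMod.ringChar_zmod_n]
  have hcard : Fintype.card (ZMod p) - 1 = 2 ^ n * z := by rwa [ZMod.card]
  have key (r g : (ZMod p)ˣ) (hr : orderOf r = 2 ^ n) := by
    simpa only [ZMod.card] using FiniteField.orderOf_mul_eq_card_sub_one_iff hF hz hcard hr g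
  refine ⟨key, fun r r' hr hr' => Set.ext fun x => ?_⟩
  simp only [Set.mem_ofPred_eq, eq_comm (a := x), ← eq_inv_mul_iff_mul_eq, exists_eq_right]
  rw [key _ _ (by rwa [orderOf_inv]), key _ _ (by rwa [orderOf_inv])]
end

section
/- Let p be an odd prime and write p - 1 = 2^n · z with z odd. An element g ∈ (ZMod p)ˣ has multiplicative order p - 1 if and only if there exist m, r ∈ (ZMod p)ˣ with m of multiplicative order (p-1)/2, r of multiplicative order 2^n, and g = m·r. -/
private lemma gcd_congr_aux {n a b : ℕ} (h : a ≡ b [MOD n]) :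
    Nat.gcd n a = Nat.gcd n b := by
  rw [Nat.gcd_rec n a, Nat.gcd_rec n b, h]

private lemma gcd_mul_coprime_aux {a b k : ℕ} (h : Nat.Coprime a b) :
    Nat.gcd (a * b) k = Nat.gcd a k * Nat.gcd b k := by
  apply Nat.dvd_antisymm
  · have h1 : Nat.gcd (a * b) k ∣ Nat.gcd (Nat.gcd (a*b) k) a * Nat.gcd (Nat.gcd (a*b) k) b :=
      Nat.dvd_gcd_mul_gcd_iff_dvd_mul.mpr (Nat.gcd_dvd_left _ _)
    refine h1.trans (Nat.mul_dvd_mul ?_ ?_)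
    · exact Nat.dvd_gcd (Nat.gcd_dvd_right _ _)
        ((Nat.gcd_dvd_left _ _).trans (Nat.gcd_dvd_right _ _))
    · exact Nat.dvd_gcd (Nat.gcd_dvd_right _ _)
        ((Nat.gcd_dvd_left _ _).trans (Nat.gcd_dvd_right _ _))
  · have hco : Nat.Coprime (Nat.gcd a k) (Nat.gcd b k) :=
      Nat.Coprime.coprime_dvd_left (Nat.gcd_dvd_left a k)
        (Nat.Coprime.coprime_dvd_right (Nat.gcd_dvd_left b k) h)
    refine Nat.Coprime.mul_dvd_of_dvd_of_dvd hco ?_ ?_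
    · exact Nat.dvd_gcd ((Nat.gcd_dvd_left a k).trans (Dvd.intro b rfl)) (Nat.gcd_dvd_right a k)
    · exact Nat.dvd_gcd ((Nat.gcd_dvd_left b k).trans (Dvd.intro_left a rfl)) (Nat.gcd_dvd_right b k)

theorem primitive_iff_semi_primitive_mul (p : ℕ) (hp : p.Prime) (hp2 : p ≠ 2)
    (n z : ℕ) (hz : Odd z) (hnz : p - 1 = 2 ^ n * z) (g : (ZMod p)ˣ) :
    orderOf g = p - 1 ↔
      ∃ m r : (ZMod p)ˣ,
        orderOf m = (p - 1) / 2 ∧ orderOf r = 2 ^ n ∧ g = m * r := by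
  haveI : Fact p.Prime := ⟨hp⟩
  have hp3 : 3 ≤ p := by
    rcases hp.two_le.lt_or_eq with h | h
    · omega
    · omega
  have hcard : Fintype.card (ZMod p)ˣ = p - 1 := by
    rw [ZMod.card_units_eq_totient, Nat.totient_prime hp]
  have hpodd : Odd p := hp.odd_of_ne_two hp2
  have hpe : Even (p - 1) := Nat.Odd.sub_odd hpodd odd_one
  have hz0 : 0 < z := hz.pos
  have hn1 : 1 ≤ n := by
    rcases Nat.eq_zero_or_pos n with rfl | h
    · simp at hnz
      rw [hnz] at hpe
      exact absurd hpe (Nat.not_even_iff_odd.mpr hz)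
    · exact h
  obtain ⟨n', rfl⟩ : ∃ n', n = n' + 1 := ⟨n - 1, by omega⟩
  have h2n : (2:ℕ) ^ (n' + 1) = 2 ^ n' * 2 := pow_succ 2 n'
  have hhalf : (p - 1) / 2 = 2 ^ n' * z := by
    rw [hnz, h2n]
    rw [show 2 ^ n' * 2 * z = 2 ^ n' * z * 2 by ring]
    exact Nat.mul_div_cancel _ (by norm_num)
  have hco2z : Nat.Coprime 2 z := Nat.coprime_two_left.mpr hz
  have hco : Nat.Coprime (2 ^ (n' + 1)) z := Nat.Coprime.pow_left _ hco2z
  have hp1pos : 0 < p - 1 := by omega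
  constructor
  · intro hg
    obtain ⟨k, hk1, hk2⟩ := Nat.chineseRemainder hco 2 1
    set K := k % (p - 1) with hKdef
    have hKk : K ≡ k [MOD p - 1] := Nat.mod_modEq k (p - 1)
    have hgk2n : Nat.gcd (2 ^ (n' + 1)) k = 2 := by
      rw [gcd_congr_aux hk1]
      rw [Nat.gcd_comm]
      exact Nat.gcd_eq_left (dvd_pow_self 2 (Nat.succ_ne_zero n'))
    have hgkz : Nat.gcd z k = 1 := by
      rw [gcd_congr_aux hk2, Nat.gcd_one_right]
    have hgcdk : Nat.gcd (p - 1) k = 2 := by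
      rw [hnz, gcd_mul_coprime_aux hco, hgk2n, hgkz, mul_one]
    have hgcdK : Nat.gcd (p - 1) K = 2 := by
      rw [gcd_congr_aux hKk, hgcdk]
    have h2k : 2 ∣ k := by
      have := Nat.gcd_dvd_right (2 ^ (n' + 1)) k
      rw [hgk2n] at this; exact this
    have h2K : 2 ∣ K := by
      have h2p1 : 2 ∣ p - 1 := hpe.two_dvd
      exact (Nat.dvd_mod_iff h2p1).mpr h2k
    have hKlt : K < p - 1 := Nat.mod_lt _ hp1pos
    have hKp : K ≤ p := by omega
    -- m := g ^ K
    refine ⟨g ^ K, g ^ (p - K), ?_, ?_, ?_⟩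
    · rw [orderOf_pow, hg, hgcdK]
    · -- orderOf (g ^ (p - K)) = 2 ^ (n'+1)
      have hzK : K ≡ 1 [MOD z] := by
        have hzdvd : z ∣ p - 1 := ⟨2 ^ (n' + 1), by rw [hnz, mul_comm]⟩
        exact (hKk.of_dvd hzdvd).trans hk2
      have hzp : (1 : ℕ) ≡ p [MOD z] := by
        exact (Nat.modEq_iff_dvd' (by omega)).mpr ⟨2 ^ (n' + 1), by rw [hnz, mul_comm]⟩
      have hzdvdpK : z ∣ p - K := (Nat.modEq_iff_dvd' hKp).mp (hzK.trans hzp)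
      have hoddpK : Odd (p - K) := Nat.Odd.sub_even hKp hpodd (even_iff_two_dvd.mpr h2K)
      have hco2pK : Nat.Coprime (2 ^ (n' + 1)) (p - K) :=
        Nat.Coprime.pow_left _ (Nat.coprime_two_left.mpr hoddpK)
      have hgcd : Nat.gcd (p - 1) (p - K) = z := by
        rw [hnz, gcd_mul_coprime_aux hco, hco2pK, one_mul]
        exact Nat.gcd_eq_left hzdvdpK
      rw [orderOf_pow, hg, hgcd, hnz]
      exact Nat.mul_div_cancel _ hz0
    · rw [← pow_add]
      have hKadd : K + (p - K) = p := by omega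
      rw [hKadd]
      have : g ^ p = g ^ (p - 1) * g := by
        rw [← pow_succ]
        congr 1
        omega
      rw [this, ← hg, pow_orderOf_eq_one, one_mul]
  · rintro ⟨m, r, hm, hr, rfl⟩
    have hddvd : orderOf (m * r) ∣ p - 1 := by
      rw [← hcard]; exact orderOf_dvd_card
    -- z divides d
    have h1 : (m * r) ^ 2 ^ (n' + 1) = m ^ 2 ^ (n' + 1) := by
      rw [mul_pow, ← hr, pow_orderOf_eq_one, mul_one]
    have h2 : orderOf (m ^ 2 ^ (n' + 1)) = z := by
      rw [orderOf_pow, hm, hhalf, h2n, Nat.gcd_mul_left]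
      rw [Nat.gcd_comm z 2, hco2z, mul_one]
      exact Nat.mul_div_cancel_left _ (by positivity)
    have hzd : z ∣ orderOf (m * r) := by
      rw [← h2, ← h1]
      exact orderOf_pow_dvd _
    -- (m*r)^((p-1)/2) ≠ 1
    have h3 : (m * r) ^ (2 ^ n' * z) = r ^ (2 ^ n' * z) := by
      rw [mul_pow, ← hhalf, ← hm, pow_orderOf_eq_one, one_mul]
    have h4 : ¬ orderOf (m * r) ∣ 2 ^ n' * z := by
      intro hdvd
      have : r ^ (2 ^ n' * z) = 1 := by
        rw [← h3]
        exact orderOf_dvd_iff_pow_eq_one.mp hdvd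
      have h5 : 2 ^ (n' + 1) ∣ 2 ^ n' * z := hr ▸ orderOf_dvd_iff_pow_eq_one.mpr this
      rw [h2n] at h5
      have h6 : 2 ∣ z := (mul_dvd_mul_iff_left (a := (2:ℕ) ^ n') (by positivity)).mp
        (by rwa [mul_comm (2^n') z] at h5 ⊢)
      exact absurd (even_iff_two_dvd.mpr h6) (Nat.not_even_iff_odd.mpr hz)
    obtain ⟨t, ht⟩ := hzd
    have htd : t ∣ 2 ^ (n' + 1) := by
      have : z * t ∣ z * 2 ^ (n' + 1) := by
        rw [← ht, mul_comm z (2 ^ (n' + 1)), ← hnz]; exact hddvd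
      exact (mul_dvd_mul_iff_left (show (0:ℕ) < z from hz0).ne').mp this
    obtain ⟨i, hi, rfl⟩ := (Nat.dvd_prime_pow Nat.prime_two).mp htd
    have hin : i = n' + 1 := by
      by_contra hne
      apply h4
      rw [ht, mul_comm]
      exact mul_dvd_mul (pow_dvd_pow 2 (by omega)) dvd_rfl
    rw [ht, hin, hnz, mul_comm]
end

section
/- Let p be an odd prime and write p - 1 = 2^n · z with z odd. Let m ∈ (ZMod p)ˣ have multiplicative order (p-1)/2 and r ∈ (ZMod p)ˣ have multiplicative order 2^n. Then for every k ≥ 1 and every prime a that does not divide z, the element m^(a^k)·r has multiplicative order p - 1. -/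
theorem pow_prime_semi_primitive_mul (p : ℕ) (hp : p.Prime) (hp2 : p ≠ 2)
    (n z : ℕ) (hz : Odd z) (hnz : p - 1 = 2 ^ n * z)
    (m r : (ZMod p)ˣ) (hm : orderOf m = (p - 1) / 2) (hr : orderOf r = 2 ^ n) :
    ∀ k : ℕ, 1 ≤ k → ∀ a : ℕ, a.Prime → ¬ a ∣ z →
      orderOf (m ^ a ^ k * r) = p - 1 := by
  intro k hk a ha haz
  have hp1 : 0 < p - 1 := by have := hp.two_le; omega
  have hz2 : z % 2 = 1 := Nat.odd_iff.mp hz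
  have hzpos : 0 < z := by omega
  have hn1 : 1 ≤ n := by
    by_contra h
    have hn0 : n = 0 := by omega
    obtain ⟨c, hc⟩ := Nat.Odd.sub_odd (hp.odd_of_ne_two hp2) odd_one
    rw [hnz, hn0, pow_zero, one_mul] at hc
    omega
  have h2n : (2:ℕ) ^ n = 2 ^ (n - 1) * 2 := by
    rw [← pow_succ]; congr 1; omega
  have hm' : orderOf m = 2 ^ (n - 1) * z := by
    rw [hm, hnz, h2n, mul_comm (2 ^ (n-1)) 2, mul_assoc,
      Nat.mul_div_cancel_left _ (by norm_num)]
  have hmdvd : orderOf m ∣ p - 1 := by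
    rw [hm', hnz, h2n]
    exact ⟨2, by ring⟩
  have hrdvd : orderOf r ∣ p - 1 := by rw [hr, hnz]; exact Dvd.intro _ rfl
  apply orderOf_eq_of_pow_and_pow_div_prime hp1
  · rw [mul_pow, ← pow_mul, mul_comm (a ^ k)]
    rw [orderOf_dvd_iff_pow_eq_one.mp (hmdvd.mul_right _),
      orderOf_dvd_iff_pow_eq_one.mp hrdvd, one_mul]
  · intro q hq hqdvd
    rw [mul_pow, ← pow_mul]
    rcases eq_or_ne q 2 with rfl | hq2
    · have hdiv : (p - 1) / 2 = 2 ^ (n - 1) * z := by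
        rw [hnz, h2n, mul_comm (2 ^ (n-1)) 2, mul_assoc,
          Nat.mul_div_cancel_left _ (by norm_num)]
      rw [hdiv]
      have h1 : m ^ (a ^ k * (2 ^ (n-1) * z)) = 1 := by
        rw [← orderOf_dvd_iff_pow_eq_one, hm']
        exact dvd_mul_left _ _
      rw [h1, one_mul]
      intro hcon
      have hd2 := orderOf_dvd_iff_pow_eq_one.mpr hcon
      rw [hr, h2n] at hd2
      have : 2 ∣ z := (mul_dvd_mul_iff_left (a := (2:ℕ)^(n-1))
        (by positivity)).mp hd2
      omega
    · -- q odd prime dividing z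
      have hqz : q ∣ z := by
        have hd : q ∣ 2 ^ n * z := hnz ▸ hqdvd
        rcases (Nat.Prime.dvd_mul hq).mp hd with h | h
        · exact absurd ((Nat.prime_dvd_prime_iff_eq hq Nat.prime_two).mp
            (hq.dvd_of_dvd_pow h)) hq2
        · exact h
      obtain ⟨t, ht⟩ := hqz
      have htpos : 0 < t := by
        rcases Nat.eq_zero_or_pos t with h | h
        · simp [h] at ht; omega
        · exact h
      have hdiv : (p - 1) / q = 2 ^ n * t := by
        rw [hnz, ht, ← mul_assoc, mul_comm (2^n) q, mul_assoc,
          Nat.mul_div_cancel_left _ hq.pos]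
      rw [hdiv]
      have h1 : r ^ (2 ^ n * t) = 1 := by
        rw [← orderOf_dvd_iff_pow_eq_one, hr]
        exact Dvd.intro _ rfl
      rw [h1, mul_one]
      intro hcon
      have hdvd := orderOf_dvd_iff_pow_eq_one.mpr hcon
      rw [hm'] at hdvd
      -- hdvd : 2^(n-1) * z ∣ a^k * (2^n * t)
      have hzd : z ∣ a ^ k * (2 ^ n * t) :=
        dvd_trans (dvd_mul_left z _) hdvd
      have hcop_a : Nat.Coprime (a ^ k) z :=
        Nat.Coprime.pow_left _ ((ha.coprime_iff_not_dvd).mpr haz)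
      have hcop_2 : Nat.Coprime (2 ^ n) z :=
        Nat.Coprime.pow_left _ (Odd.coprime_two_left hz)
      have hzt : z ∣ t := by
        have := (Nat.Coprime.dvd_of_dvd_mul_left hcop_a.symm hzd)
        exact Nat.Coprime.dvd_of_dvd_mul_left hcop_2.symm this
      have := Nat.le_of_dvd htpos hzt
      have hq2le := hq.two_le
      nlinarith [ht]
end

section
/- Let p be an odd prime and write p - 1 = 2^n · z with z odd. Let g ∈ (ZMod p)ˣ have multiplicative order (p-1)/2 and m' ∈ (ZMod p)ˣ have multiplicative order 2^n, with g^z · m'^(2z) = 1. Define the sequence U by U₀ = g and U_{x+1} = (m'·U_x)². Let k be the least positive integer such that z divides 2^k - 1. Then for all x, U_x has multiplicative order (p-1)/2 and m'·U_x has multiplicative order p - 1; moreover the values U₀, U₁, …, U_{k-1} are pairwise distinct and U_k = U₀ (so U is periodic of period k). -/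
/-!
Put `c = g * m'²`. Then `c ^ z = 1`, so `c` has odd order, and `g = m'⁻² * c` splits `g` into
commuting parts of coprime orders; comparing with `orderOf g = 2^(n-1) z` forces `orderOf c = z`.
By induction `U x = m'⁻² * c^(2^x)` and `m' * U x = m'⁻¹ * c^(2^x)`, where `c^(2^x)` still has
order `z`, so the orders multiply to `(p-1)/2` and `p-1`. Finally `U (x+d) = U x` iff
`c^(2^x (2^d - 1)) = 1` iff `z ∣ 2^d - 1`, which gives both the period and the distinctness.
-/

section CommGroup

variable {G : Type*} [CommGroup G]

lemma orderOf_mul_of_two_pow_of_odd {a c : G} {n : ℕ} (ha : orderOf a = 2 ^ n)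
    (hc : Odd (orderOf c)) : orderOf (a * c) = 2 ^ n * orderOf c := by
  rw [(Commute.all a c).orderOf_mul_eq_mul_orderOf_of_coprime
    (ha ▸ (Nat.coprime_two_left.mpr hc).pow_left n), ha]

lemma orderOf_eq_of_orderOf_two_pow_mul {a c : G} {n z : ℕ} (ha : orderOf a = 2 ^ n)
    (hz : Odd z) (hcz : c ^ z = 1) (hac : orderOf (a * c) = 2 ^ n * z) : orderOf c = z := by
  have hdvd : orderOf c ∣ z := orderOf_dvd_of_pow_eq_one hcz
  rw [orderOf_mul_of_two_pow_of_odd ha (hz.of_dvd_nat hdvd)] at hac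
  exact Nat.eq_of_mul_eq_mul_left (by positivity) hac

lemma orderOf_inv_sq_of_orderOf_eq_two_pow_succ {m : G} {s : ℕ} (hm : orderOf m = 2 ^ (s + 1)) :
    orderOf (m ^ 2)⁻¹ = 2 ^ s := by
  rw [orderOf_inv, orderOf_pow_of_dvd two_ne_zero (hm ▸ dvd_pow_self 2 s.succ_ne_zero), hm,
    pow_succ, Nat.mul_div_cancel _ two_pos]

lemma orderOf_pow_two_pow_of_odd {c : G} (hc : Odd (orderOf c)) (x : ℕ) :
    orderOf (c ^ 2 ^ x) = orderOf c :=
  ((Nat.coprime_two_right.mpr hc).pow_right x).orderOf_pow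

lemma pow_two_pow_add_eq_iff {c : G} (hc : Odd (orderOf c)) (x d : ℕ) :
    c ^ 2 ^ (x + d) = c ^ 2 ^ x ↔ orderOf c ∣ 2 ^ d - 1 := by
  have hsplit : c ^ 2 ^ (x + d) = (c ^ 2 ^ x) ^ (2 ^ d - 1) * c ^ 2 ^ x := by
    rw [← pow_succ, Nat.sub_add_cancel Nat.one_le_two_pow, ← pow_mul, pow_add]
  rw [hsplit, mul_eq_right, ← orderOf_dvd_iff_pow_eq_one, orderOf_pow_two_pow_of_odd hc]

lemma eq_mul_pow_two_pow_of_forall_succ {m c : G} {U : ℕ → G} (hU0 : U 0 = (m ^ 2)⁻¹ * c)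
    (hU : ∀ x, U (x + 1) = (m * U x) ^ 2) (x : ℕ) : U x = (m ^ 2)⁻¹ * c ^ 2 ^ x := by
  induction x with
  | zero => simpa using hU0
  | succ x ih =>
    have hcancel : m * ((m ^ 2)⁻¹ * c ^ 2 ^ x) = m⁻¹ * c ^ 2 ^ x := by group
    rw [hU, ih, hcancel, mul_pow, inv_pow, pow_succ 2 x, pow_mul]

end CommGroup

theorem sequence_of_semi_primitive_roots (p : ℕ) (hp : p.Prime) (hp2 : p ≠ 2)
    (n z : ℕ) (hz : Odd z) (hnz : p - 1 = 2 ^ n * z)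
    (g m' : (ZMod p)ˣ) (hg : orderOf g = (p - 1) / 2) (hm' : orderOf m' = 2 ^ n)
    (hgm : g ^ z * m' ^ (2 * z) = 1)
    (U : ℕ → (ZMod p)ˣ) (hU0 : U 0 = g) (hU : ∀ x, U (x + 1) = (m' * U x) ^ 2)
    (k : ℕ) (hk : 0 < k ∧ z ∣ 2 ^ k - 1 ∧ ∀ j, 0 < j → z ∣ 2 ^ j - 1 → k ≤ j) :
    (∀ x, orderOf (U x) = (p - 1) / 2 ∧ orderOf (m' * U x) = p - 1) ∧
    (∀ x y, x < y → y < k → U x ≠ U y) ∧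
    U k = U 0 ∧ (∀ x, U (x + k) = U x) := by
  obtain ⟨-, hkz, hkmin⟩ := hk
  obtain ⟨s, rfl⟩ : ∃ s, n = s + 1 := Nat.exists_eq_succ_of_ne_zero fun hn0 => by
    obtain ⟨t, ht⟩ := hp.odd_of_ne_two hp2
    obtain ⟨r, hr⟩ := hz
    rw [hn0, pow_zero, one_mul] at hnz
    omega
  have hhalf : (p - 1) / 2 = 2 ^ s * z := by
    rw [hnz, pow_succ, mul_right_comm, Nat.mul_div_cancel _ two_pos]
  set c := g * m' ^ 2
  have hgc : (m' ^ 2)⁻¹ * c = g := by simp [c]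
  have hinv : orderOf (m' ^ 2)⁻¹ = 2 ^ s := orderOf_inv_sq_of_orderOf_eq_two_pow_succ hm'
  have hcz : orderOf c = z := by
    refine orderOf_eq_of_orderOf_two_pow_mul hinv hz (by rw [mul_pow, ← pow_mul, hgm]) ?_
    rwa [hgc, ← hhalf]
  have hcodd : Odd (orderOf c) := hcz ▸ hz
  have hpow : ∀ x, orderOf (c ^ 2 ^ x) = z := fun x =>
    (orderOf_pow_two_pow_of_odd hcodd x).trans hcz
  have hUc : ∀ x, U x = (m' ^ 2)⁻¹ * c ^ 2 ^ x :=
    eq_mul_pow_two_pow_of_forall_succ (hU0.trans hgc.symm) hU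
  have hperiod : ∀ x d, U (x + d) = U x ↔ z ∣ 2 ^ d - 1 := fun x d => by
    rw [hUc, hUc, mul_right_inj, pow_two_pow_add_eq_iff hcodd, hcz]
  refine ⟨fun x => ⟨?_, ?_⟩, ?_, by simpa using (hperiod 0 k).2 hkz,
    fun x => (hperiod x k).2 hkz⟩
  · rw [hUc, orderOf_mul_of_two_pow_of_odd hinv (hpow x ▸ hz), hpow, hhalf]
  · have hm'U : m' * U x = m'⁻¹ * c ^ 2 ^ x := by rw [hUc]; group
    rw [hm'U, orderOf_mul_of_two_pow_of_odd (by rwa [orderOf_inv]) (hpow x ▸ hz), hpow, hnz]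
  · intro x y hxy hyk hUxy
    obtain ⟨d, rfl⟩ := Nat.exists_eq_add_of_lt hxy
    have hdvd : z ∣ 2 ^ (d + 1) - 1 :=
      (hperiod x (d + 1)).1 (by rw [← add_assoc]; exact hUxy.symm)
    have := hkmin (d + 1) d.succ_pos hdvd
    omega
end

section
/- Let p be an odd prime and write p - 1 = 2^n · z with z odd. If m ∈ (ZMod p)ˣ is a square, then there exists r ∈ (ZMod p)ˣ with r^(2^n) = 1 such that (m^((p-z)/2) · r)² = m; moreover, for this r, the element m^((p-z)/2) · r is a square in (ZMod p)ˣ if and only if r is a square in (ZMod p)ˣ. -/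
/-!
Write `m = s ^ 2` and take `r = s ^ z`. Then `r ^ (2 ^ n) = s ^ (p - 1) = 1`, and
`(m ^ ((p - z) / 2) * r) ^ 2 = m ^ (p - z) * m ^ z = m ^ p = m` by Fermat. Since
`m ^ ((p - z) / 2)` is itself a square, multiplying by it does not change whether an element
is a square.
-/

theorem IsSquare.mul_right_iff {G : Type*} [CommGroup G] {a b : G} (ha : IsSquare a) :
    IsSquare (a * b) ↔ IsSquare b :=
  ⟨fun hab => by simpa using hab.div ha, ha.mul⟩

theorem sq_pow_mul_pow_eq_sq {G : Type*} [CommGroup G] (s : G) {k z : ℕ}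
    (hkz : 2 * k + z = Nat.card G + 1) : ((s ^ 2) ^ k * s ^ z) ^ 2 = s ^ 2 := by
  calc ((s ^ 2) ^ k * s ^ z) ^ 2 = (s ^ Nat.card G) ^ 2 * s ^ 2 := by
        rw [← pow_mul, ← pow_add, ← pow_mul, ← pow_mul, ← pow_add]
        congr 1
        linarith
    _ = s ^ 2 := by rw [pow_card_eq_one', one_pow, one_mul]

theorem sqrt_of_quadratic_residue (p : ℕ) (hp : p.Prime) (hp2 : p ≠ 2)
    (n z : ℕ) (hz : Odd z) (hnz : p - 1 = 2 ^ n * z)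
    (m : (ZMod p)ˣ) (hm : IsSquare m) :
    ∃ r : (ZMod p)ˣ, r ^ (2 ^ n) = 1 ∧
      (m ^ ((p - z) / 2) * r) ^ 2 = m ∧
      (IsSquare (m ^ ((p - z) / 2) * r) ↔ IsSquare r) := by
  have : Fact p.Prime := ⟨hp⟩
  have hcard : Nat.card (ZMod p)ˣ = p - 1 := by
    rw [Nat.card_eq_fintype_card, ZMod.card_units p]
  have hz_le : z ≤ p - 1 := hnz ▸ Nat.le_mul_of_pos_left z (Nat.two_pow_pos n)
  have hpz : 2 * ((p - z) / 2) = p - z :=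
    Nat.two_mul_div_two_of_even (Nat.Odd.sub_odd (hp.odd_of_ne_two hp2) hz)
  have hexp : 2 * ((p - z) / 2) + z = Nat.card (ZMod p)ˣ + 1 := by
    have := hp.pos
    omega
  obtain ⟨s, rfl⟩ := (isSquare_iff_exists_sq m).mp hm
  refine ⟨s ^ z, ?_, ?_, hm.pow _ |>.mul_right_iff⟩
  · rw [← pow_mul, mul_comm, ← hnz, ← hcard, pow_card_eq_one']
  · exact sq_pow_mul_pow_eq_sq s hexp
end
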